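/- arXiv:2509.20266 — 4 statements merged into one kernel-verified Lean document; each statement's English description precedes it below -/
import Mathlib

section
/- There exists a nonempty set A ⊆ ℕ with the following property: there is no computable function f : ℕ → ℕ such that both (i) for every n ∈ ℕ the set W_{f(n)} ∩ A has exactly one element, and (ii) A ⊆ ⋃_{n ∈ ℕ} W_{f(n)}. -/
open scoped Classical

/-- `W e` is the domain of the `e`-th partial computable function. -/
def W (e : ℕ) : Set ℕ :=
  {x : ℕ | ((Denumerable.ofNat Nat.Partrec.Code e).eval x).Dom}

/-- Total‑ization of the `e`-th partial computable function (value `0` off the domain). -/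
noncomputable def feval (e n : ℕ) : ℕ :=
  if h : ((Denumerable.ofNat Nat.Partrec.Code e).eval n).Dom
  then ((Denumerable.ofNat Nat.Partrec.Code e).eval n).get h else 0

lemma exists_feval {f : ℕ → ℕ} (hf : Computable f) : ∃ e, ∀ n, feval e n = f n := by
  obtain ⟨c, hc⟩ := Nat.Partrec.Code.exists_code.mp (Partrec.nat_iff.mp hf.partrec)
  refine ⟨Encodable.encode c, fun n => ?_⟩
  unfold feval
  rw [Denumerable.ofNat_encode, hc]
  simp [PFun.coe_val]

/-- One step of the construction.  First part: members of `A`; second part: restrained. -/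
noncomputable def stepAux (e : ℕ) (s : Finset ℕ × Finset ℕ) : Finset ℕ × Finset ℕ :=
  if h1 : ∃ q : ℕ × ℕ × ℕ, q.2.1 ≠ q.2.2 ∧ q.2.1 ∈ W (feval e q.1) ∧
      q.2.2 ∈ W (feval e q.1) ∧ q.2.1 ∉ s.2 ∧ q.2.2 ∉ s.2 then
    (insert h1.choose.2.1 (insert h1.choose.2.2 s.1), s.2)
  else if h2 : ∃ q : ℕ × ℕ, W (feval e q.1) \ ↑s.2 = {q.2} ∧ q.2 ∉ s.1 then
    (s.1, insert h2.choose.2 s.2)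
  else s

noncomputable def step (e : ℕ) (s : Finset ℕ × Finset ℕ) : Finset ℕ × Finset ℕ :=
  (insert (((stepAux e s).1 ∪ (stepAux e s).2).sup id + 1) (stepAux e s).1, (stepAux e s).2)

noncomputable def states : ℕ → Finset ℕ × Finset ℕ
  | 0 => (∅, ∅)
  | e + 1 => step e (states e)

def Ainf : Set ℕ := {x | ∃ e, x ∈ (states e).1}

lemma sup_succ_notMem {x : ℕ} (t : Finset ℕ) (h : x ∈ t) : t.sup id + 1 ≠ x := by
  have := Finset.le_sup (f := id) h
  simp only [id] at this
  omega

lemma subset_stepAux_fst (e : ℕ) (s : Finset ℕ × Finset ℕ) : s.1 ⊆ (stepAux e s).1 := by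
  unfold stepAux
  split_ifs with h1 h2
  · exact (Finset.subset_insert _ _).trans (Finset.subset_insert _ _)
  · exact subset_rfl
  · exact subset_rfl

lemma subset_stepAux_snd (e : ℕ) (s : Finset ℕ × Finset ℕ) : s.2 ⊆ (stepAux e s).2 := by
  unfold stepAux
  split_ifs with h1 h2
  · exact subset_rfl
  · exact Finset.subset_insert _ _
  · exact subset_rfl

lemma subset_step_fst (e : ℕ) (s : Finset ℕ × Finset ℕ) : s.1 ⊆ (step e s).1 :=
  (subset_stepAux_fst e s).trans (Finset.subset_insert _ _)

lemma subset_step_snd (e : ℕ) (s : Finset ℕ × Finset ℕ) : s.2 ⊆ (step e s).2 :=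
  subset_stepAux_snd e s

lemma stepAux_inv (e : ℕ) (s : Finset ℕ × Finset ℕ)
    (hs : ∀ x, x ∈ s.1 → x ∈ s.2 → False) :
    ∀ x, x ∈ (stepAux e s).1 → x ∈ (stepAux e s).2 → False := by
  unfold stepAux
  split_ifs with h1 h2
  · obtain ⟨-, -, -, hx, hy⟩ := h1.choose_spec
    intro x hxA hxR
    rcases Finset.mem_insert.mp hxA with rfl | hxA
    · exact hx hxR
    rcases Finset.mem_insert.mp hxA with rfl | hxA
    · exact hy hxR
    · exact hs _ hxA hxR
  · obtain ⟨-, hp⟩ := h2.choose_spec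
    intro x hxA hxR
    rcases Finset.mem_insert.mp hxR with rfl | hxR
    · exact hp hxA
    · exact hs _ hxA hxR
  · exact hs

lemma step_inv (e : ℕ) (s : Finset ℕ × Finset ℕ)
    (hs : ∀ x, x ∈ s.1 → x ∈ s.2 → False) :
    ∀ x, x ∈ (step e s).1 → x ∈ (step e s).2 → False := by
  intro x hxA hxR
  rcases Finset.mem_insert.mp hxA with rfl | hxA
  · exact sup_succ_notMem _ (Finset.mem_union_right _ hxR) rfl
  · exact stepAux_inv e s hs x hxA hxR

lemma states_inv (e : ℕ) : ∀ x, x ∈ (states e).1 → x ∈ (states e).2 → False := by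
  induction e with
  | zero => intro x hx; simp [states] at hx
  | succ e ih => exact step_inv e (states e) ih

lemma states_mono_fst {s t : ℕ} (h : s ≤ t) : (states s).1 ⊆ (states t).1 := by
  induction t with
  | zero => simp [Nat.le_zero.mp h]
  | succ t ih =>
    rcases Nat.lt_or_ge s (t + 1) with h' | h'
    · exact (ih (Nat.lt_succ_iff.mp h')).trans (subset_step_fst t (states t))
    · simp [Nat.le_antisymm h h']

lemma states_mono_snd {s t : ℕ} (h : s ≤ t) : (states s).2 ⊆ (states t).2 := by
  induction t with
  | zero => simp [Nat.le_zero.mp h]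
  | succ t ih =>
    rcases Nat.lt_or_ge s (t + 1) with h' | h'
    · exact (ih (Nat.lt_succ_iff.mp h')).trans (subset_step_snd t (states t))
    · simp [Nat.le_antisymm h h']

/-- Nothing ever restrained gets into `Ainf`. -/
lemma Ainf_disj_restraint {x : ℕ} {t : ℕ} (hx : x ∈ Ainf) (hR : x ∈ (states t).2) : False := by
  obtain ⟨s, hs⟩ := hx
  rcases Nat.le_total s t with h | h
  · exact states_inv t x (states_mono_fst h hs) hR
  · exact states_inv s x hs (states_mono_snd h hR)

lemma card_states (e : ℕ) : e ≤ (states e).1.card := by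
  induction e with
  | zero => simp
  | succ e ih =>
    have h1 : ((stepAux e (states e)).1 ∪ (stepAux e (states e)).2).sup id + 1 ∉
        (stepAux e (states e)).1 := fun h =>
      sup_succ_notMem _ (Finset.mem_union_left _ h) rfl
    have : (states (e + 1)).1.card = (stepAux e (states e)).1.card + 1 :=
      Finset.card_insert_of_notMem h1
    have h2 : (states e).1.card ≤ (stepAux e (states e)).1.card :=
      Finset.card_le_card (subset_stepAux_fst e (states e))
    omega

lemma Ainf_infinite : Ainf.Infinite := by
  intro hfin
  set N := hfin.toFinset.card with hN
  have hsub : (states (N + 1)).1 ⊆ hfin.toFinset := fun x hx =>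
    hfin.mem_toFinset.mpr ⟨N + 1, hx⟩
  have := Finset.card_le_card hsub
  have := card_states (N + 1)
  omega

lemma Ainf_nonempty : Ainf.Nonempty :=
  Set.Infinite.nonempty Ainf_infinite

/-- There exists a nonempty set `A ⊆ ℕ` such that no computable function
`f : ℕ → ℕ` satisfies both: every `W (f n) ∩ A` has exactly one element, and
`A ⊆ ⋃ n, W (f n)`. -/
theorem exists_nonempty_set_no_computable_enumeration :
    ∃ A : Set ℕ, A.Nonempty ∧
      ¬ ∃ f : ℕ → ℕ, Computable f ∧
        (∀ n : ℕ, ∃! x : ℕ, x ∈ W (f n) ∩ A) ∧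
        A ⊆ ⋃ n : ℕ, W (f n) := by
  refine ⟨Ainf, Ainf_nonempty, ?_⟩
  rintro ⟨f, hf, huniq, hcover⟩
  obtain ⟨e, he⟩ := exists_feval hf
  have hWe : ∀ n, W (feval e n) = W (f n) := fun n => by rw [he n]
  by_cases h1 : ∃ q : ℕ × ℕ × ℕ, q.2.1 ≠ q.2.2 ∧ q.2.1 ∈ W (feval e q.1) ∧
      q.2.2 ∈ W (feval e q.1) ∧ q.2.1 ∉ (states e).2 ∧ q.2.2 ∉ (states e).2
  · -- two distinct elements of some `W (f n)` enter `A`: uniqueness fails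
    obtain ⟨hne, hx, hy, -, -⟩ := h1.choose_spec
    have hstep : (states (e + 1)).1
        = insert (((stepAux e (states e)).1 ∪ (stepAux e (states e)).2).sup id + 1)
            (stepAux e (states e)).1 := rfl
    have haux : (stepAux e (states e)).1
        = insert h1.choose.2.1 (insert h1.choose.2.2 (states e).1) := by
      unfold stepAux
      rw [dif_pos h1]
    have hxA : h1.choose.2.1 ∈ Ainf := by
      refine ⟨e + 1, ?_⟩
      rw [hstep, haux]
      exact Finset.mem_insert_of_mem (Finset.mem_insert_self _ _)
    have hyA : h1.choose.2.2 ∈ Ainf := by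
      refine ⟨e + 1, ?_⟩
      rw [hstep, haux]
      exact Finset.mem_insert_of_mem
        (Finset.mem_insert_of_mem (Finset.mem_insert_self _ _))
    obtain ⟨z, -, hz⟩ := huniq h1.choose.1
    have e1 := hz h1.choose.2.1 ⟨(hWe _) ▸ hx, hxA⟩
    have e2 := hz h1.choose.2.2 ⟨(hWe _) ▸ hy, hyA⟩
    exact hne (e1.trans e2.symm)
  · by_cases h2 : ∃ q : ℕ × ℕ, W (feval e q.1) \ ↑(states e).2 = {q.2} ∧ q.2 ∉ (states e).1
    · -- the unique candidate gets restrained: that `W (f n)` misses `A`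
      obtain ⟨hset, -⟩ := h2.choose_spec
      have haux : (stepAux e (states e)).2 = insert h2.choose.2 (states e).2 := by
        unfold stepAux
        rw [dif_neg h1, dif_pos h2]
      obtain ⟨z, ⟨hzW, hzA⟩, -⟩ := huniq h2.choose.1
      have hzW' : z ∈ W (feval e h2.choose.1) := (hWe _) ▸ hzW
      have hzR : z ∈ (states (e + 1)).2 := by
        have : (states (e + 1)).2 = (stepAux e (states e)).2 := rfl
        rw [this, haux]
        by_cases hz2 : z ∈ (states e).2
        · exact Finset.mem_insert_of_mem hz2
        · have : z ∈ W (feval e h2.choose.1) \ ↑(states e).2 := ⟨hzW', hz2⟩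
          rw [hset] at this
          simp only [Set.mem_singleton_iff] at this
          simp [this]
      exact Ainf_disj_restraint hzA hzR
    · -- every `W (f n)` is inside the (finite) current state: `A` can't be covered
      have hsub : ∀ n x, x ∈ W (feval e n) → x ∈ (states e).2 ∨ x ∈ (states e).1 := by
        intro n x hx
        by_cases hxR : x ∈ (states e).2
        · exact Or.inl hxR
        right
        have hset : W (feval e n) \ ↑(states e).2 = {x} := by
          ext y
          simp only [Set.mem_diff, Set.mem_singleton_iff, Finset.coe_sort_coe,
            Finset.mem_coe]
          constructor
          · rintro ⟨hyW, hyR⟩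
            by_contra hne
            exact h1 ⟨(n, y, x), hne, hyW, hx, hyR, hxR⟩
          · rintro rfl
            exact ⟨hx, hxR⟩
        by_contra hxA
        exact h2 ⟨(n, x), hset, hxA⟩
      have hAsub : Ainf ⊆ ↑(states e).1 := by
        intro a ha
        obtain ⟨n, hn⟩ := Set.mem_iUnion.mp (hcover ha)
        rcases hsub n a ((hWe n) ▸ hn) with hR | hA
        · exact absurd hR (fun h => Ainf_disj_restraint ha h)
        · exact hA
      exact Ainf_infinite ((states e).1.finite_toSet.subset hAsub)
end

section
/- There do not exist computable functions u, v : ℕ → ℕ such that v tends to infinity (Filter.Tendsto v atTop atTop) and, for every computable function f : ℕ → ℕ, one has f (v n) ≤ u n for all sufficiently large n. Equivalently: for all computable u, v : ℕ → ℕ with v tending to infinity, there exists a computable f : ℕ → ℕ such that u n < f (v n) for infinitely many n. -/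
/-- There are no computable functions `u v : ℕ → ℕ` with `v` tending to infinity
such that every computable function `f : ℕ → ℕ` satisfies `f (v n) ≤ u n` for all
sufficiently large `n`. -/
theorem no_computable_bound_on_computable_functions :
    ¬ ∃ u v : ℕ → ℕ, Computable u ∧ Computable v ∧
        Filter.Tendsto v Filter.atTop Filter.atTop ∧
        ∀ f : ℕ → ℕ, Computable f →
          ∀ᶠ n in Filter.atTop, f (v n) ≤ u n := by
  rintro ⟨u, v, hu, hv, hvt, hbound⟩
  have hex : ∀ j : ℕ, ∃ n, j ≤ v n := fun j => (hvt.eventually_ge_atTop j).exists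
  set nn : ℕ → ℕ := fun j => Nat.find (hex j) with hnn_def
  have hspec : ∀ j, j ≤ v (nn j) := fun j => Nat.find_spec (hex j)
  have hmin : ∀ j m, m < nn j → ¬ j ≤ v m := fun j m hm => Nat.find_min (hex j) hm
  -- computability of nn
  have hp : Computable₂ fun (a n : ℕ) => decide (a ≤ v n) :=
    Primrec.nat_le.decide.to_comp.comp Computable.fst (hv.comp Computable.snd)
  have hnn : Computable nn := by
    have := Partrec.rfind hp.partrec₂
    refine this.of_eq fun a => ?_
    refine Part.eq_some_iff.2 ?_
    refine Nat.mem_rfind.2 ⟨?_, fun {m} hm => ?_⟩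
    · simp [hspec a]
    · simp [hmin a m hm]
  -- the diagonal function
  set G : ℕ → ℕ := fun m => Nat.rec (u (nn 0)) (fun k s => max s (u (nn (k + 1)))) m with hG_def
  set f : ℕ → ℕ := fun m => G m + 1 with hf_def
  have hG : Computable G := by
    have h2 : Computable₂ fun (a : ℕ) (p : ℕ × ℕ) => max p.2 (u (nn (p.1 + 1))) := by
      refine Primrec.nat_max.to_comp.comp
        (Computable.snd.comp Computable.snd)
        ((hu.comp hnn).comp (Computable.succ.comp (Computable.fst.comp Computable.snd)))
    exact Computable.nat_rec Computable.id (Computable.const (u (nn 0))) h2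
  have hf : Computable f := Primrec.succ.to_comp.comp hG
  have hkey : ∀ j m, j ≤ m → u (nn j) ≤ G m := by
    intro j m hjm
    induction m with
    | zero => interval_cases j; simp [hG_def]
    | succ k ih =>
      rcases Nat.lt_or_ge j (k + 1) with h | h
      · exact le_trans (ih (Nat.lt_succ_iff.1 h)) (le_max_left _ _)
      · have : j = k + 1 := le_antisymm hjm h
        subst this
        exact le_max_right _ _
  obtain ⟨N, hN⟩ := (hbound f hf).exists_forall_of_atTop
  -- find j with nn j ≥ N
  set j : ℕ := (Finset.range N).sup v + 1 with hj_def
  have hnnj : N ≤ nn j := by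
    by_contra h
    push_neg at h
    have h1 : j ≤ v (nn j) := hspec j
    have h2 : v (nn j) ≤ (Finset.range N).sup v :=
      Finset.le_sup (Finset.mem_range.2 h)
    omega
  have h1 := hN (nn j) hnnj
  have h2 : u (nn j) < f (v (nn j)) := by
    have := hkey j (v (nn j)) (hspec j)
    simp only [hf_def]
    omega
  omega
end

section
/- Equip the set S with the topology generated by the family consisting of all singletons {(n,m)} for n, m ∈ ℕ, all sets D(n₀,m₀) for n₀, m₀ ∈ ℕ, and all sets E(m₀,f) for m₀ ∈ ℕ and ALL functions f : ℕ → ℕ. Then the point (∞,∞) belongs to the closure of the subset ℕ² ⊆ S of points with both coordinates finite, but no sequence of points of ℕ² converges to (∞,∞) in this topology. -/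
namespace ArensLike

/-- The underlying set: pairs `(n, m)` with `n, m ∈ ℕ ∪ {∞}` (where `∞` is `none`),
restricted so that the first coordinate can be `∞` while the second is finite,
together with the point `(∞, ∞)`. -/
abbrev S : Type := {p : Option ℕ × Option ℕ // p.2 = none → p.1 = none}

/-- The singleton basic set `{(n, m)}` for finite `n, m`. -/
def Sing (n m : ℕ) : Set S :=
  {p : S | (p : Option ℕ × Option ℕ) = (some n, some m)}

/-- `D(n₀, m₀) = {(n, m₀) | n ≥ n₀} ∪ {(∞, m₀)}`. -/
def D (n₀ m₀ : ℕ) : Set S :=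
  {p : S | ∃ n : ℕ, n₀ ≤ n ∧ (p : Option ℕ × Option ℕ) = (some n, some m₀)} ∪
    {p : S | (p : Option ℕ × Option ℕ) = ((none : Option ℕ), some m₀)}

/-- `E(m₀, f) = {(∞, ∞)} ∪ ⋃_{m ≥ m₀} D(f m, m)`. -/
def E (m₀ : ℕ) (f : ℕ → ℕ) : Set S :=
  {p : S | (p : Option ℕ × Option ℕ) = ((none : Option ℕ), (none : Option ℕ))} ∪
    ⋃ m : ℕ, ⋃ (_ : m₀ ≤ m), D (f m) m

/-- The generating family of subsets, for a given class `F` of functions allowed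
in the sets `E(m₀, f)`. -/
def gen (F : Set (ℕ → ℕ)) : Set (Set S) :=
  {s : Set S | (∃ n m : ℕ, s = Sing n m) ∨ (∃ n₀ m₀ : ℕ, s = D n₀ m₀) ∨
    (∃ m₀ : ℕ, ∃ f : ℕ → ℕ, f ∈ F ∧ s = E m₀ f)}

/-- The topology on `S` generated by the family `gen F`. -/
def topo (F : Set (ℕ → ℕ)) : TopologicalSpace S :=
  TopologicalSpace.generateFrom (gen F)

/-- The point `(∞, ∞)`. -/
def infPt : S := ⟨((none : Option ℕ), (none : Option ℕ)), fun _ => rfl⟩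

/-- The subset `ℕ² ⊆ S` of points with both coordinates finite. -/
def finitePts : Set S :=
  {p : S | ∃ n m : ℕ, (p : Option ℕ × Option ℕ) = (some n, some m)}

/-- The inclusion of `ℕ²` into `S`. -/
def emb (q : ℕ × ℕ) : S :=
  ⟨(some q.1, some q.2), fun h => absurd h (by simp)⟩

lemma emb_mem_E {n m M : ℕ} {f : ℕ → ℕ} : emb (n, m) ∈ E M f ↔ M ≤ m ∧ f m ≤ n := by
  constructor
  · rintro (h | h)
    · simp [emb] at h
    · simp only [Set.mem_iUnion] at h
      obtain ⟨m', hm', h⟩ := h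
      rcases h with ⟨n', hn', h⟩ | h
      · simp only [emb, Prod.mk.injEq, Option.some.injEq] at h
        obtain ⟨rfl, rfl⟩ := h
        exact ⟨hm', hn'⟩
      · simp [emb] at h
  · rintro ⟨hM, hf⟩
    right
    simp only [Set.mem_iUnion]
    exact ⟨m, hM, Or.inl ⟨n, hf, rfl⟩⟩

lemma infPt_mem_E (M : ℕ) (f : ℕ → ℕ) : infPt ∈ E M f := Or.inl rfl

lemma E_open (M : ℕ) (f : ℕ → ℕ) : @IsOpen S (topo Set.univ) (E M f) :=
  TopologicalSpace.GenerateOpen.basic _ (Or.inr (Or.inr ⟨M, f, trivial, rfl⟩))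

lemma aux_open (U : Set S) (h : TopologicalSpace.GenerateOpen (gen Set.univ) U)
    (hU : infPt ∈ U) : ∃ M, ∀ m ≥ M, ∃ N, ∀ n ≥ N, emb (n, m) ∈ U := by
  induction h with
  | basic s hs =>
    rcases hs with ⟨n, m, rfl⟩ | ⟨n₀, m₀, rfl⟩ | ⟨m₀, f, -, rfl⟩
    · simp [Sing, infPt] at hU
    · rcases hU with ⟨n, -, h⟩ | h <;> simp [infPt] at h
    · exact ⟨m₀, fun m hm => ⟨f m, fun n hn => emb_mem_E.mpr ⟨hm, hn⟩⟩⟩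
  | univ => exact ⟨0, fun m _ => ⟨0, fun n _ => trivial⟩⟩
  | inter u v hu hv ihu ihv =>
    obtain ⟨M₁, h₁⟩ := ihu hU.1
    obtain ⟨M₂, h₂⟩ := ihv hU.2
    refine ⟨max M₁ M₂, fun m hm => ?_⟩
    obtain ⟨N₁, hN₁⟩ := h₁ m (le_trans (le_max_left _ _) hm)
    obtain ⟨N₂, hN₂⟩ := h₂ m (le_trans (le_max_right _ _) hm)
    exact ⟨max N₁ N₂, fun n hn =>
      ⟨hN₁ n (le_trans (le_max_left _ _) hn), hN₂ n (le_trans (le_max_right _ _) hn)⟩⟩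
  | sUnion ts hts ih =>
    obtain ⟨t, ht, hxt⟩ := hU
    obtain ⟨M, hM⟩ := ih t ht hxt
    exact ⟨M, fun m hm => (hM m hm).imp fun N hN n hn => ⟨t, ht, hN n hn⟩⟩

/-- With the topology generated by all singletons `{(n,m)}`, all `D(n₀,m₀)`, and all
`E(m₀,f)` for arbitrary `f : ℕ → ℕ`, the point `(∞,∞)` is in the closure of `ℕ²`,
but no sequence of points of `ℕ²` converges to `(∞,∞)`. -/
theorem infPt_mem_closure_and_no_sequence_tendsto :
    infPt ∈ @closure S (topo Set.univ) finitePts ∧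
      ∀ s : ℕ → ℕ × ℕ,
        ¬ Filter.Tendsto (fun n => emb (s n)) Filter.atTop
            (@nhds S (topo Set.univ) infPt) := by
  letI : TopologicalSpace S := topo Set.univ
  constructor
  · rw [mem_closure_iff]
    intro U hU hx
    obtain ⟨M, hM⟩ := aux_open U hU hx
    obtain ⟨N, hN⟩ := hM M le_rfl
    exact ⟨emb (N, M), hN N le_rfl, N, M, rfl⟩
  · intro s hT
    have h2 : ∀ M : ℕ, ∃ N, ∀ k ≥ N, M ≤ (s k).2 := by
      intro M
      have hmem : E M (fun _ => 0) ∈ nhds infPt :=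
        (E_open M _).mem_nhds (infPt_mem_E M _)
      have := hT hmem
      rw [Filter.mem_map, Filter.mem_atTop_sets] at this
      obtain ⟨N, hN⟩ := this
      refine ⟨N, fun k hk => ?_⟩
      have := hN k hk
      exact (emb_mem_E.mp (by simpa using this)).1
    choose Nf hNf using fun m => h2 (m + 1)
    set f : ℕ → ℕ := fun m => (Finset.range (Nf m)).sup (fun k => (s k).1) + 1 with hf
    have hnot : ∀ k, emb (s k) ∉ E 0 f := by
      intro k hk
      have hk' : f (s k).2 ≤ (s k).1 := by
        have := emb_mem_E.mp (by simpa using hk)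
        exact this.2
      by_cases hlt : k < Nf (s k).2
      · have : (s k).1 ≤ (Finset.range (Nf (s k).2)).sup (fun k => (s k).1) :=
          Finset.le_sup (f := fun k => (s k).1) (Finset.mem_range.mpr hlt)
        have hfeq : f (s k).2 = (Finset.range (Nf (s k).2)).sup (fun k => (s k).1) + 1 := rfl
        omega
      · have := hNf (s k).2 k (not_lt.mp hlt)
        omega
    have hmem : E 0 f ∈ nhds infPt := (E_open 0 f).mem_nhds (infPt_mem_E 0 f)
    have := hT hmem
    rw [Filter.mem_map, Filter.mem_atTop_sets] at this
    obtain ⟨N, hN⟩ := this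
    exact hnot N (hN N le_rfl)


end ArensLike
end

section
/- Let X be a T₀ topological space and B : ℕ → Set X a sequence of open sets whose range is a topological basis of X. Suppose given, for all i, j ∈ ℕ, open sets U i j, closed sets A i j, and continuous functions g i j : X → ℝ with 0 ≤ g i j x ≤ 1 for all x, such that: U i j ⊆ A i j ⊆ B i, B i = ⋃_j U i j, g i j x = 1 for every x ∉ B i, and g i j x = 0 for every x ∈ A i j. Then the map h : X → (ℕ × ℕ → ℝ) defined by h x (i,j) = g i j x is a topological embedding of X into the product space ℝ^(ℕ×ℕ) (and its image lies in the Hilbert cube [0,1]^(ℕ×ℕ)). In particular, for all x ∈ X and i ∈ ℕ, x ∈ B i if and only if there exists j with g i j x < 1. -/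
/-- Schröder–Urysohn embedding construction: given a T₀ space `X` with a countable
basis `B`, open sets `U i j`, closed sets `A i j` and continuous `[0,1]`-valued
functions `g i j` with `U i j ⊆ A i j ⊆ B i`, `B i = ⋃ j, U i j`, `g i j = 1`
outside `B i` and `g i j = 0` on `A i j`, the map `x ↦ (g i j x)_{(i,j)}` is a
topological embedding of `X` into `ℝ^(ℕ×ℕ)` whose image lies in the Hilbert cube,
and for all `x` and `i`, `x ∈ B i ↔ ∃ j, g i j x < 1`. -/
theorem embedding_into_hilbert_cube_of_urysohn_data {X : Type*} [TopologicalSpace X]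
    [T0Space X] (B : ℕ → Set X) (hBopen : ∀ i, IsOpen (B i))
    (hB : TopologicalSpace.IsTopologicalBasis (Set.range B))
    (U : ℕ → ℕ → Set X) (A : ℕ → ℕ → Set X) (g : ℕ → ℕ → X → ℝ)
    (hU : ∀ i j, IsOpen (U i j)) (hA : ∀ i j, IsClosed (A i j))
    (hg : ∀ i j, Continuous (g i j))
    (hg01 : ∀ i j x, g i j x ∈ Set.Icc (0 : ℝ) 1)
    (hUA : ∀ i j, U i j ⊆ A i j) (hAB : ∀ i j, A i j ⊆ B i)
    (hcover : ∀ i, B i = ⋃ j, U i j)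
    (hone : ∀ i j, ∀ x ∉ B i, g i j x = 1)
    (hzero : ∀ i j, ∀ x ∈ A i j, g i j x = 0) :
    Topology.IsEmbedding (fun (x : X) (p : ℕ × ℕ) => g p.1 p.2 x) ∧
      (∀ x : X, ∀ p : ℕ × ℕ, (fun (p : ℕ × ℕ) => g p.1 p.2 x) p ∈ Set.Icc (0 : ℝ) 1) ∧
      (∀ (x : X) (i : ℕ), x ∈ B i ↔ ∃ j, g i j x < 1) := by
  set h : X → (ℕ × ℕ → ℝ) := fun x p => g p.1 p.2 x with hh
  have hcont : Continuous h := continuous_pi fun p => hg p.1 p.2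
  have hiff : ∀ (x : X) (i : ℕ), x ∈ B i ↔ ∃ j, g i j x < 1 := by
    intro x i
    constructor
    · intro hx
      rw [hcover i] at hx
      obtain ⟨j, hj⟩ := Set.mem_iUnion.mp hx
      exact ⟨j, by rw [hzero i j x (hUA i j hj)]; norm_num⟩
    · rintro ⟨j, hj⟩
      by_contra hx
      rw [hone i j x hx] at hj
      exact lt_irrefl 1 hj
  have hnhds : ∀ x : X, nhds x = Filter.comap h (nhds (h x)) := by
    intro x
    refine le_antisymm (Filter.tendsto_iff_comap.mp (hcont.tendsto x)) ?_
    intro s hs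
    obtain ⟨t, hts, htopen, hxt⟩ := mem_nhds_iff.mp hs
    obtain ⟨v, ⟨i, rfl⟩, hxv, hvt⟩ := hB.exists_subset_of_mem_open hxt htopen
    have hxU : x ∈ ⋃ j, U i j := (hcover i) ▸ hxv
    obtain ⟨j, hj⟩ := Set.mem_iUnion.mp hxU
    refine Filter.mem_comap.mpr ⟨(fun f : ℕ × ℕ → ℝ => f (i, j)) ⁻¹' Set.Iio 1, ?_, ?_⟩
    · refine IsOpen.mem_nhds ((isOpen_Iio).preimage (continuous_apply (i, j))) ?_
      show g i j x < 1
      rw [hzero i j x (hUA i j hj)]; norm_num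
    · intro y hy
      have : g i j y < 1 := hy
      have hyB : y ∈ B i := (hiff y i).mpr ⟨j, this⟩
      exact hts (hvt hyB)
  have hind : Topology.IsInducing h := Topology.isInducing_iff_nhds.mpr hnhds
  have hinj : Function.Injective h := by
    intro x y hxy
    have : Inseparable x y := by
      rw [inseparable_iff_forall_isOpen]
      intro s hs
      have : nhds x = nhds y := by rw [hnhds x, hnhds y, hxy]
      constructor
      · intro hx; exact mem_of_mem_nhds (this ▸ hs.mem_nhds hx)
      · intro hy; exact mem_of_mem_nhds (this.symm ▸ hs.mem_nhds hy)
    exact this.eq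
  exact ⟨⟨hind, hinj⟩, fun x p => hg01 p.1 p.2 x, hiff⟩
end
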